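/- Let v: ℝ → ℝ be a smooth positive 2π-periodic function and define Q(θ) = (1/9) v(θ)^{5/3} (v''''(θ) + 10 v''(θ) + 9 v(θ)). Then ∫₀^{2π} Q'(θ) v(θ)^{-2/3} cos(2θ) dθ = 0 and ∫₀^{2π} Q'(θ) v(θ)^{-2/3} sin(2θ) dθ = 0. -/

import Mathlib

open Real intervalIntegral

private lemma periodic_deriv'' {f : ℝ → ℝ} {c : ℝ} (h : Function.Periodic f c) :
    Function.Periodic (deriv f) c := by
  intro x
  have hf : f = fun y => f (y + c) := funext fun y => (h y).symm
  conv_rhs => rw [hf]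
  rw [deriv_comp_add_const]

private lemma periodic_iteratedDeriv' {f : ℝ → ℝ} {c : ℝ} (h : Function.Periodic f c) (k : ℕ) :
    Function.Periodic (iteratedDeriv k f) c := by
  induction k with
  | zero => simpa [iteratedDeriv_zero] using h
  | succ n ih => rw [iteratedDeriv_succ]; exact periodic_deriv'' ih

private noncomputable def Gcos (v : ℝ → ℝ) (θ : ℝ) : ℝ :=
  (1/27) * (36 * v θ * iteratedDeriv 1 v θ * Real.sin (2*θ)
    + 18 * v θ * iteratedDeriv 2 v θ * Real.cos (2*θ)
    + 6 * v θ * iteratedDeriv 3 v θ * Real.sin (2*θ)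
    + 3 * v θ * iteratedDeriv 4 v θ * Real.cos (2*θ)
    + 18 * iteratedDeriv 1 v θ ^ 2 * Real.cos (2*θ)
    - 2 * iteratedDeriv 1 v θ * iteratedDeriv 2 v θ * Real.sin (2*θ)
    + 2 * iteratedDeriv 1 v θ * iteratedDeriv 3 v θ * Real.cos (2*θ)
    - iteratedDeriv 2 v θ ^ 2 * Real.cos (2*θ))

private noncomputable def Gsin (v : ℝ → ℝ) (θ : ℝ) : ℝ :=
  (1/27) * (-(36 * v θ * iteratedDeriv 1 v θ * Real.cos (2*θ))
    + 18 * v θ * iteratedDeriv 2 v θ * Real.sin (2*θ)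
    - 6 * v θ * iteratedDeriv 3 v θ * Real.cos (2*θ)
    + 3 * v θ * iteratedDeriv 4 v θ * Real.sin (2*θ)
    + 18 * iteratedDeriv 1 v θ ^ 2 * Real.sin (2*θ)
    + 2 * iteratedDeriv 1 v θ * iteratedDeriv 2 v θ * Real.cos (2*θ)
    + 2 * iteratedDeriv 1 v θ * iteratedDeriv 3 v θ * Real.sin (2*θ)
    - iteratedDeriv 2 v θ ^ 2 * Real.sin (2*θ))

theorem stmt3 (v : ℝ → ℝ) (hv : ContDiff ℝ (⊤ : ℕ∞) v) (hpos : ∀ θ, 0 < v θ)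
    (hper : Function.Periodic v (2 * Real.pi)) (Q : ℝ → ℝ)
    (hQ : ∀ θ, Q θ = (1/9) * v θ ^ ((5:ℝ)/3) *
      (iteratedDeriv 4 v θ + 10 * iteratedDeriv 2 v θ + 9 * v θ)) :
    (∫ θ in (0:ℝ)..(2 * Real.pi),
        deriv Q θ * v θ ^ (-(2:ℝ)/3) * Real.cos (2 * θ)) = 0 ∧
    (∫ θ in (0:ℝ)..(2 * Real.pi),
        deriv Q θ * v θ ^ (-(2:ℝ)/3) * Real.sin (2 * θ)) = 0 := by
  have hd : ∀ (k : ℕ) (θ : ℝ), HasDerivAt (iteratedDeriv k v) (iteratedDeriv (k+1) v θ) θ := by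
    intro k θ
    rw [iteratedDeriv_succ]
    exact ((hv.differentiable_iteratedDeriv k (by exact_mod_cast ENat.coe_lt_top k)) θ).hasDerivAt
  have hd0 : ∀ θ : ℝ, HasDerivAt v (iteratedDeriv 1 v θ) θ := by
    intro θ; simpa [iteratedDeriv_zero] using hd 0 θ
  have ck : ∀ k : ℕ, Continuous (iteratedDeriv k v) := fun k =>
    hv.continuous_iteratedDeriv k (by exact_mod_cast le_top)
  have cv : Continuous v := hv.continuous
  have hQfun : Q = fun θ => (1/9) * v θ ^ ((5:ℝ)/3) *
      (iteratedDeriv 4 v θ + 10 * iteratedDeriv 2 v θ + 9 * v θ) := funext hQ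
  have hQd : ∀ θ : ℝ, HasDerivAt Q
      ((1/9) * (iteratedDeriv 1 v θ * ((5:ℝ)/3) * v θ ^ ((2:ℝ)/3)) *
          (iteratedDeriv 4 v θ + 10 * iteratedDeriv 2 v θ + 9 * v θ)
        + (1/9) * v θ ^ ((5:ℝ)/3) *
          (iteratedDeriv 5 v θ + 10 * iteratedDeriv 3 v θ + 9 * iteratedDeriv 1 v θ)) θ := by
    intro θ
    rw [hQfun]
    have h1 : HasDerivAt (fun x => v x ^ ((5:ℝ)/3))
        (iteratedDeriv 1 v θ * ((5:ℝ)/3) * v θ ^ ((2:ℝ)/3)) θ := by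
      have := (hd0 θ).rpow_const (p := (5:ℝ)/3) (Or.inl (hpos θ).ne')
      convert this using 2
      all_goals norm_num
    have h2 : HasDerivAt (fun x => iteratedDeriv 4 v x + 10 * iteratedDeriv 2 v x + 9 * v x)
        (iteratedDeriv 5 v θ + 10 * iteratedDeriv 3 v θ + 9 * iteratedDeriv 1 v θ) θ :=
      (((hd 4 θ).add ((hd 2 θ).const_mul 10)).add ((hd0 θ).const_mul 9))
    have h3 := (h1.const_mul ((1:ℝ)/9)).mul h2
    exact h3.congr_deriv (by ring)
  have key : ∀ θ : ℝ, deriv Q θ * v θ ^ (-(2:ℝ)/3) =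
      (5/27) * iteratedDeriv 1 v θ *
        (iteratedDeriv 4 v θ + 10 * iteratedDeriv 2 v θ + 9 * v θ)
      + (1/9) * v θ *
        (iteratedDeriv 5 v θ + 10 * iteratedDeriv 3 v θ + 9 * iteratedDeriv 1 v θ) := by
    intro θ
    rw [(hQd θ).deriv]
    have e1 : v θ ^ ((2:ℝ)/3) * v θ ^ (-(2:ℝ)/3) = 1 := by
      rw [← Real.rpow_add (hpos θ)]; norm_num
    have e2 : v θ ^ ((5:ℝ)/3) * v θ ^ (-(2:ℝ)/3) = v θ := by
      rw [← Real.rpow_add (hpos θ)]; norm_num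
    linear_combination ((5:ℝ)/27 * iteratedDeriv 1 v θ *
        (iteratedDeriv 4 v θ + 10 * iteratedDeriv 2 v θ + 9 * v θ)) * e1 +
      ((1:ℝ)/9 * (iteratedDeriv 5 v θ + 10 * iteratedDeriv 3 v θ + 9 * iteratedDeriv 1 v θ)) * e2
  have hcos : ∀ θ : ℝ, HasDerivAt (fun x => Real.cos (2*x)) (-2 * Real.sin (2*θ)) θ := by
    intro θ
    have h2 : HasDerivAt (fun x : ℝ => 2*x) 2 θ := by
      simpa using (hasDerivAt_id θ).const_mul (2:ℝ)
    have h := (Real.hasDerivAt_cos (2*θ)).comp θ h2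
    exact h.congr_deriv (by ring)
  have hsin : ∀ θ : ℝ, HasDerivAt (fun x => Real.sin (2*x)) (2 * Real.cos (2*θ)) θ := by
    intro θ
    have h2 : HasDerivAt (fun x : ℝ => 2*x) 2 θ := by
      simpa using (hasDerivAt_id θ).const_mul (2:ℝ)
    have h := (Real.hasDerivAt_sin (2*θ)).comp θ h2
    exact h.congr_deriv (by ring)
  have hGc : ∀ θ : ℝ, HasDerivAt (Gcos v)
      (((5/27) * iteratedDeriv 1 v θ *
        (iteratedDeriv 4 v θ + 10 * iteratedDeriv 2 v θ + 9 * v θ)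
      + (1/9) * v θ *
        (iteratedDeriv 5 v θ + 10 * iteratedDeriv 3 v θ + 9 * iteratedDeriv 1 v θ))
        * Real.cos (2*θ)) θ := by
    intro θ
    have h1 := (((hd0 θ).const_mul (36:ℝ)).mul (hd 1 θ)).mul (hsin θ)
    have h2 := (((hd0 θ).const_mul (18:ℝ)).mul (hd 2 θ)).mul (hcos θ)
    have h3 := (((hd0 θ).const_mul (6:ℝ)).mul (hd 3 θ)).mul (hsin θ)
    have h4 := (((hd0 θ).const_mul (3:ℝ)).mul (hd 4 θ)).mul (hcos θ)
    have h5 := (((hd 1 θ).pow 2).const_mul (18:ℝ)).mul (hcos θ)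
    have h6 := (((hd 1 θ).const_mul (2:ℝ)).mul (hd 2 θ)).mul (hsin θ)
    have h7 := (((hd 1 θ).const_mul (2:ℝ)).mul (hd 3 θ)).mul (hcos θ)
    have h8 := ((hd 2 θ).pow 2).mul (hcos θ)
    have H := (((((((h1.add h2).add h3).add h4).add h5).sub h6).add h7).sub h8).const_mul
      ((1:ℝ)/27)
    exact H.congr_deriv (by simp only [Pi.mul_apply, Pi.pow_apply, Nat.reduceAdd, Nat.reduceSub]; ring)
  have hGs : ∀ θ : ℝ, HasDerivAt (Gsin v)
      (((5/27) * iteratedDeriv 1 v θ *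
        (iteratedDeriv 4 v θ + 10 * iteratedDeriv 2 v θ + 9 * v θ)
      + (1/9) * v θ *
        (iteratedDeriv 5 v θ + 10 * iteratedDeriv 3 v θ + 9 * iteratedDeriv 1 v θ))
        * Real.sin (2*θ)) θ := by
    intro θ
    have h1 := ((((hd0 θ).const_mul (36:ℝ)).mul (hd 1 θ)).mul (hcos θ)).neg
    have h2 := (((hd0 θ).const_mul (18:ℝ)).mul (hd 2 θ)).mul (hsin θ)
    have h3 := (((hd0 θ).const_mul (6:ℝ)).mul (hd 3 θ)).mul (hcos θ)
    have h4 := (((hd0 θ).const_mul (3:ℝ)).mul (hd 4 θ)).mul (hsin θ)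
    have h5 := (((hd 1 θ).pow 2).const_mul (18:ℝ)).mul (hsin θ)
    have h6 := (((hd 1 θ).const_mul (2:ℝ)).mul (hd 2 θ)).mul (hcos θ)
    have h7 := (((hd 1 θ).const_mul (2:ℝ)).mul (hd 3 θ)).mul (hsin θ)
    have h8 := ((hd 2 θ).pow 2).mul (hsin θ)
    have H := (((((((h1.add h2).sub h3).add h4).add h5).add h6).add h7).sub h8).const_mul
      ((1:ℝ)/27)
    exact H.congr_deriv (by simp only [Pi.mul_apply, Pi.pow_apply, Nat.reduceAdd, Nat.reduceSub]; ring)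
  -- boundary values coincide
  have hp : ∀ k : ℕ, iteratedDeriv k v (2*Real.pi) = iteratedDeriv k v 0 := by
    intro k
    simpa using (periodic_iteratedDeriv' hper k) 0
  have hv2 : v (2*Real.pi) = v 0 := by simpa using hper 0
  have hc4 : Real.cos (2*(2*Real.pi)) = 1 := by
    rw [show (2*(2*Real.pi)) = 2*Real.pi + 2*Real.pi by ring, Real.cos_add_two_pi,
      Real.cos_two_pi]
  have hs4 : Real.sin (2*(2*Real.pi)) = 0 := by
    rw [show (2*(2*Real.pi)) = 2*Real.pi + 2*Real.pi by ring, Real.sin_add_two_pi,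
      Real.sin_two_pi]
  have hbc : Gcos v (2*Real.pi) = Gcos v 0 := by
    simp [Gcos, hp, hv2, hc4, hs4]
  have hbs : Gsin v (2*Real.pi) = Gsin v 0 := by
    simp [Gsin, hp, hv2, hc4, hs4]
  have hcont : Continuous (fun θ : ℝ =>
      ((5/27) * iteratedDeriv 1 v θ *
        (iteratedDeriv 4 v θ + 10 * iteratedDeriv 2 v θ + 9 * v θ)
      + (1/9) * v θ *
        (iteratedDeriv 5 v θ + 10 * iteratedDeriv 3 v θ + 9 * iteratedDeriv 1 v θ))) := by
    have c1 := ck 1; have c2 := ck 2; have c3 := ck 3; have c4 := ck 4; have c5 := ck 5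
    fun_prop
  constructor
  · have h1 : (∫ θ in (0:ℝ)..(2 * Real.pi),
        deriv Q θ * v θ ^ (-(2:ℝ)/3) * Real.cos (2 * θ)) = Gcos v (2*Real.pi) - Gcos v 0 := by
      apply intervalIntegral.integral_eq_sub_of_hasDerivAt
      · intro θ _
        rw [key θ]
        exact hGc θ
      · have heq : (fun θ : ℝ => deriv Q θ * v θ ^ (-(2:ℝ)/3) * Real.cos (2 * θ)) =
            (fun θ : ℝ =>
              ((5/27) * iteratedDeriv 1 v θ *
                (iteratedDeriv 4 v θ + 10 * iteratedDeriv 2 v θ + 9 * v θ)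
              + (1/9) * v θ *
                (iteratedDeriv 5 v θ + 10 * iteratedDeriv 3 v θ + 9 * iteratedDeriv 1 v θ))
                * Real.cos (2*θ)) := by
          funext θ; rw [key θ]
        rw [heq]
        exact (hcont.mul (Real.continuous_cos.comp (continuous_const.mul
          continuous_id))).intervalIntegrable _ _
    rw [h1, hbc, sub_self]
  · have h1 : (∫ θ in (0:ℝ)..(2 * Real.pi),
        deriv Q θ * v θ ^ (-(2:ℝ)/3) * Real.sin (2 * θ)) = Gsin v (2*Real.pi) - Gsin v 0 := by
      apply intervalIntegral.integral_eq_sub_of_hasDerivAt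
      · intro θ _
        rw [key θ]
        exact hGs θ
      · have heq : (fun θ : ℝ => deriv Q θ * v θ ^ (-(2:ℝ)/3) * Real.sin (2 * θ)) =
            (fun θ : ℝ =>
              ((5/27) * iteratedDeriv 1 v θ *
                (iteratedDeriv 4 v θ + 10 * iteratedDeriv 2 v θ + 9 * v θ)
              + (1/9) * v θ *
                (iteratedDeriv 5 v θ + 10 * iteratedDeriv 3 v θ + 9 * iteratedDeriv 1 v θ))
                * Real.sin (2*θ)) := by
          funext θ; rw [key θ]
        rw [heq]
        exact (hcont.mul (Real.continuous_sin.comp (continuous_const.mul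
          continuous_id))).intervalIntegrable _ _
    rw [h1, hbs, sub_self]
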